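/- Let f_W(x) = W^4 ρ(W^3 ρ(W^2 ρ(W^1 x))) be a 4-layer neural network and let f_Ŵ(x) = W^4 ρ(W^3 ρ(Ŵ^2 ρ(W^1 x))) be the network in which only the second weight matrix is replaced by Ŵ^2 ∈ B_{W^2}(ε_2) (input unperturbed). Then for any two output classes c_1, c_2: f^{c_1 c_2}_{Ŵ}(x) − f^{c_1 c_2}_W(x) ≤ ε_2 ‖z^1‖_1 ‖W^3‖_∞ ‖W^4_{c_1,:} − W^4_{c_2,:}‖_1, where z^1 = ρ(W^1 x). -/

import Mathlib

/-- Vector ℓ1 norm: `‖v‖₁ = Σ_q |v_q|`. -/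
noncomputable def vecL1 {n : ℕ} (v : Fin n → ℝ) : ℝ := ∑ q, |v q|

/-- Vector ℓ∞ norm: `‖v‖_∞ = max_q |v_q|`. -/
noncomputable def vecLinf {n : ℕ} (v : Fin n → ℝ) : ℝ := ⨆ q, |v q|

/-- Matrix ℓ∞→ℓ∞ operator norm: `‖W‖_∞ = max_p Σ_q |W_{p,q}|`. -/
noncomputable def matLinf {m n : ℕ} (W : Matrix (Fin m) (Fin n) ℝ) : ℝ := ⨆ p, ∑ q, |W p q|

/-- Matrix ℓ1→ℓ1 operator norm: `‖W‖₁ = max_q Σ_p |W_{p,q}|`. -/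
noncomputable def matL1 {m n : ℕ} (W : Matrix (Fin m) (Fin n) ℝ) : ℝ := ⨆ q, ∑ p, |W p q|

/-- The 4-layer feed-forward network `f_W(x) = W^4 ρ(W^3 ρ(W^2 ρ(W^1 x)))`. -/
noncomputable def net4 {n0 n1 n2 n3 n4 : ℕ}
    (W1 : Matrix (Fin n1) (Fin n0) ℝ) (W2 : Matrix (Fin n2) (Fin n1) ℝ)
    (W3 : Matrix (Fin n3) (Fin n2) ℝ) (W4 : Matrix (Fin n4) (Fin n3) ℝ)
    (ρ : ℝ → ℝ) (x : Fin n0 → ℝ) : Fin n4 → ℝ :=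
  W4.mulVec (fun p =>
    ρ (W3.mulVec (fun q =>
      ρ (W2.mulVec (fun r => ρ (W1.mulVec x r)) q)) p))

/-!
The perturbation `Ŵ² - W²` moves each preactivation of layer 2 by at most `ε₂ ‖z¹‖₁` (Hölder),
the 1-Lipschitz `ρ` does not enlarge this, `W³` multiplies the resulting sup-norm bound by at most
`‖W³‖_∞`, and a last Hölder step against the row difference `W⁴_{c₁,:} − W⁴_{c₂,:}` gives the bound.
-/

open Matrix

section Norms

variable {m n : ℕ}

lemma vecL1_nonneg (v : Fin n → ℝ) : 0 ≤ vecL1 v :=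
  Finset.sum_nonneg fun q _ => abs_nonneg (v q)

lemma vecL1_row_le_matLinf (A : Matrix (Fin m) (Fin n) ℝ) (p : Fin m) :
    vecL1 (A p) ≤ matLinf A :=
  le_ciSup (Set.finite_range fun p => ∑ q, |A p q|).bddAbove p

lemma abs_dotProduct_le_vecL1_mul (a : Fin n → ℝ) {v : Fin n → ℝ} {C : ℝ}
    (hv : ∀ q, |v q| ≤ C) : |a ⬝ᵥ v| ≤ vecL1 a * C :=
  calc |a ⬝ᵥ v| ≤ ∑ q, |a q| * |v q| := by
        simpa only [dotProduct, abs_mul] using Finset.abs_sum_le_sum_abs (fun q => a q * v q) _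
    _ ≤ ∑ q, |a q| * C :=
        Finset.sum_le_sum fun q _ => mul_le_mul_of_nonneg_left (hv q) (abs_nonneg (a q))
    _ = vecL1 a * C := by rw [vecL1, Finset.sum_mul]

lemma abs_mulVec_le_matLinf_mul (A : Matrix (Fin m) (Fin n) ℝ) {v : Fin n → ℝ} {C : ℝ}
    (hC : 0 ≤ C) (hv : ∀ q, |v q| ≤ C) (p : Fin m) : |(A *ᵥ v) p| ≤ matLinf A * C :=
  (abs_dotProduct_le_vecL1_mul (A p) hv).trans
    (mul_le_mul_of_nonneg_right (vecL1_row_le_matLinf A p) hC)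

lemma abs_mulVec_sub_mulVec_le {A B : Matrix (Fin m) (Fin n) ℝ} {ε : ℝ}
    (h : ∀ p q, |A p q - B p q| ≤ ε) (v : Fin n → ℝ) (p : Fin m) :
    |(A *ᵥ v) p - (B *ᵥ v) p| ≤ ε * vecL1 v := by
  rw [← Pi.sub_apply, ← sub_mulVec, mulVec, dotProduct_comm, mul_comm]
  exact abs_dotProduct_le_vecL1_mul v (h p)

end Norms

theorem statement7_general {n0 n1 n2 n3 n4 : ℕ}
    (W1 : Matrix (Fin n1) (Fin n0) ℝ) (W2 What2 : Matrix (Fin n2) (Fin n1) ℝ)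
    (W3 : Matrix (Fin n3) (Fin n2) ℝ) (W4 : Matrix (Fin n4) (Fin n3) ℝ)
    (ρ : ℝ → ℝ)
    (hρ_lip : ∀ s t, |ρ s - ρ t| ≤ |s - t|)
    (ε2 : ℝ) (hε2 : 0 ≤ ε2)
    (h2 : ∀ p q, |What2 p q - W2 p q| ≤ ε2)
    (x : Fin n0 → ℝ) (c1 c2 : Fin n4) :
    (net4 W1 What2 W3 W4 ρ x c1 - net4 W1 What2 W3 W4 ρ x c2) -
        (net4 W1 W2 W3 W4 ρ x c1 - net4 W1 W2 W3 W4 ρ x c2) ≤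
      ε2 * vecL1 (fun r => ρ (W1.mulVec x r)) * matLinf W3 *
        vecL1 (fun t => W4 c1 t - W4 c2 t) := by
  set z1 : Fin n1 → ℝ := fun r => ρ ((W1 *ᵥ x) r)
  set z2 : Fin n2 → ℝ := fun q => ρ ((W2 *ᵥ z1) q)
  set z2' : Fin n2 → ℝ := fun q => ρ ((What2 *ᵥ z1) q)
  set y : Fin n3 → ℝ := fun t => ρ ((W3 *ᵥ z2) t)
  set y' : Fin n3 → ℝ := fun t => ρ ((W3 *ᵥ z2') t)
  have hz2 : ∀ q, |(z2' - z2) q| ≤ ε2 * vecL1 z1 := fun q =>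
    (hρ_lip _ _).trans (abs_mulVec_sub_mulVec_le h2 z1 q)
  have hy : ∀ t, |(y' - y) t| ≤ matLinf W3 * (ε2 * vecL1 z1) := fun t =>
    (hρ_lip _ _).trans <| by
      rw [← Pi.sub_apply, ← mulVec_sub]
      exact abs_mulVec_le_matLinf_mul W3 (mul_nonneg hε2 (vecL1_nonneg z1)) hz2 t
  have hnet : net4 W1 W2 W3 W4 ρ x = W4 *ᵥ y := rfl
  have hnet' : net4 W1 What2 W3 W4 ρ x = W4 *ᵥ y' := rfl
  calc _ = (W4 c1 - W4 c2) ⬝ᵥ (y' - y) := by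
        rw [hnet, hnet', dotProduct_sub, sub_dotProduct, sub_dotProduct]
        rfl
    _ ≤ vecL1 (fun t => W4 c1 t - W4 c2 t) * (matLinf W3 * (ε2 * vecL1 z1)) :=
        (le_abs_self _).trans (abs_dotProduct_le_vecL1_mul _ hy)
    _ = _ := by ring

/-- for a 4-layer network with only the second weight matrix
perturbed (`Ŵ^2 ∈ B_{W^2}(ε_2)`, input unperturbed), for any output classes `c₁, c₂`:
`f^{c₁c₂}_{Ŵ}(x) − f^{c₁c₂}_W(x) ≤ ε_2 ‖z^1‖_1 ‖W^3‖_∞ ‖W^4_{c₁,:} − W^4_{c₂,:}‖_1`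
where `z^1 = ρ(W^1 x)`. -/
theorem statement7 {n0 n1 n2 n3 n4 : ℕ}
    (W1 : Matrix (Fin n1) (Fin n0) ℝ) (W2 What2 : Matrix (Fin n2) (Fin n1) ℝ)
    (W3 : Matrix (Fin n3) (Fin n2) ℝ) (W4 : Matrix (Fin n4) (Fin n3) ℝ)
    (ρ : ℝ → ℝ) (hρ_nonneg : ∀ t, 0 ≤ ρ t) (hρ_mono : Monotone ρ)
    (hρ_lip : ∀ s t, |ρ s - ρ t| ≤ |s - t|)
    (ε2 : ℝ) (hε2 : 0 ≤ ε2)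
    (h2 : ∀ p q, |What2 p q - W2 p q| ≤ ε2)
    (x : Fin n0 → ℝ) (c1 c2 : Fin n4) :
    (net4 W1 What2 W3 W4 ρ x c1 - net4 W1 What2 W3 W4 ρ x c2) -
        (net4 W1 W2 W3 W4 ρ x c1 - net4 W1 W2 W3 W4 ρ x c2) ≤
      ε2 * vecL1 (fun r => ρ (W1.mulVec x r)) * matLinf W3 *
        vecL1 (fun t => W4 c1 t - W4 c2 t) :=
  statement7_general W1 W2 What2 W3 W4 ρ hρ_lip ε2 hε2 h2 x c1 c2
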